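/- If a channel's complementary channel is exactly constant on pure inputs, the channel is perfectly distance-preserving on pure states: let V : K ↪ B ⊗ F be an isometry with tr_B(Vφ V†) = σ for a fixed state σ and all pure states φ on K; then for all pure states φ, ψ on K, ‖tr_F(VφV†) − tr_F(VψV†)‖₁ = ‖φ − ψ‖₁. -/

import Mathlib

open Matrix
open scoped ComplexOrder
noncomputable section

/-- The positive semidefinite square root of a positive semidefinite matrix
(the definition of `Matrix.PosSemidef.sqrt` in the older Mathlib, which has since been removed). -/
def Matrix.PosSemidef.sqrt {n : Type*} [Fintype n] [DecidableEq n] {𝕜 : Type*} [RCLike 𝕜]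
    {A : Matrix n n 𝕜} (hA : A.PosSemidef) : Matrix n n 𝕜 :=
  (hA.1.eigenvectorUnitary : Matrix n n 𝕜) *
    diagonal (fun i => ((Real.sqrt (hA.1.eigenvalues i) : ℝ) : 𝕜)) *
    (star hA.1.eigenvectorUnitary : Matrix n n 𝕜)

/-- The trace norm `‖X‖₁ = tr √(XᴴX)`. -/
def traceNorm {ι : Type*} [Fintype ι] [DecidableEq ι] (X : Matrix ι ι ℂ) : ℝ :=
  ((Matrix.posSemidef_conjTranspose_mul_self X).sqrt.trace).re

/-- Rank-one (outer product) matrix `|v⟩⟨v|`. -/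
def outer {ι : Type*} [Fintype ι] (v : ι → ℂ) : Matrix ι ι ℂ :=
  Matrix.vecMulVec v (star v)

/-- Partial trace over the second tensor factor. -/
def ptrace₂ {ι κ : Type*} [Fintype ι] [Fintype κ]
    (M : Matrix (ι × κ) (ι × κ) ℂ) : Matrix ι ι ℂ :=
  Matrix.of fun i j => ∑ s, M (i, s) (j, s)

/-- Partial trace over the first tensor factor. -/
def ptrace₁ {ι κ : Type*} [Fintype ι] [Fintype κ]
    (M : Matrix (ι × κ) (ι × κ) ℂ) : Matrix κ κ ℂ :=
  Matrix.of fun s t => ∑ i, M (i, s) (i, t)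

/-! Diagonalise `φφ† − ψψ† = ∑ⱼ λⱼ eⱼeⱼ†` in an orthonormal eigenbasis. Constancy of the
complementary channel on unit vectors extends, by homogeneity and polarization, to
`tr_B(Vx (Vy)†) = ⟨y, x⟩ σ` for all `x, y`; hence the outputs `tr_F(V eⱼeⱼ† V†)` are pairwise
orthogonal positive matrices, just like the `eⱼeⱼ†`. The trace norm of `∑ⱼ cⱼ ρⱼ` over such an
orthogonal family is `∑ⱼ |cⱼ| tr ρⱼ`, and `tr_F(V · V†)` preserves traces, so both trace norms
equal `∑ⱼ |λⱼ|`. -/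

theorem LinearMap.apply_eq_zero_of_apply_self_eq_zero {E M : Type*} [AddCommGroup E]
    [Module ℂ E] [AddCommGroup M] [Module ℂ M] (B : E →ₗ[ℂ] E →ₗ⋆[ℂ] M)
    (h : ∀ z, B z z = 0) (x y : E) : B x y = 0 := by
  have hre := h (x + y)
  have him := h (x + Complex.I • y)
  simp only [map_add, map_smul, LinearMap.add_apply, LinearMap.smul_apply, map_smulₛₗ,
    Complex.conj_I, h x, h y, zero_add, add_zero] at hre him
  have hxy : B x y = -B y x := eq_neg_of_add_eq_zero_right hre
  rw [hxy] at him ⊢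
  have : (2 * Complex.I) • B y x = 0 := by rw [← him]; module
  simpa [Complex.I_ne_zero] using this

theorem LinearMap.apply_self_eq_zero_of_forall_norm_eq_one {E M : Type*}
    [NormedAddCommGroup E] [InnerProductSpace ℂ E] [AddCommGroup M] [Module ℂ M]
    (B : E →ₗ[ℂ] E →ₗ⋆[ℂ] M) (h : ∀ u, ‖u‖ = 1 → B u u = 0) (z : E) : B z z = 0 := by
  obtain rfl | hz := eq_or_ne z 0
  · simp
  obtain ⟨c, u, hu, rfl⟩ : ∃ (c : ℂ) (u : E), ‖u‖ = 1 ∧ z = c • u :=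
    ⟨‖z‖, (‖z‖⁻¹ : ℂ) • z, norm_smul_inv_norm hz, by simp [smul_smul, hz]⟩
  simp [h u hu]

theorem posSemidef_outer {n : Type*} [Fintype n] (x : n → ℂ) : (outer x).PosSemidef :=
  posSemidef_vecMulVec_self_star x

theorem outer_mul_outer_eq_zero_of_inner_eq_zero {n : Type*} [Fintype n]
    {x y : EuclideanSpace ℂ n} (h : inner ℂ x y = 0) : outer x * outer y = 0 := by
  rw [outer, outer, vecMulVec_mul_vecMulVec, dotProduct_comm,
    ← EuclideanSpace.inner_eq_star_dotProduct, h, zero_smul, vecMulVec_zero]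

theorem Matrix.IsHermitian.eq_sum_smul_outer_eigenvectorBasis {n : Type*} [Fintype n]
    [DecidableEq n] {A : Matrix n n ℂ} (hA : A.IsHermitian) :
    A = ∑ j, hA.eigenvalues j • outer (hA.eigenvectorBasis j) := by
  have hcomplete : ∑ j, outer (hA.eigenvectorBasis j) = 1 := by
    rw [← Unitary.coe_mul_star_self hA.eigenvectorUnitary]
    ext a c
    simp [outer, Matrix.sum_apply, Matrix.mul_apply, vecMulVec_apply]
  calc A = A * ∑ j, outer (hA.eigenvectorBasis j) := by rw [hcomplete, Matrix.mul_one]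
    _ = _ := by
      simp [Finset.mul_sum, outer, mul_vecMulVec, hA.mulVec_eigenvectorBasis, smul_vecMulVec]

open scoped MatrixOrder in
theorem Matrix.PosSemidef.sqrt_eq_cfc_sqrt {n : Type*} [Fintype n] [DecidableEq n]
    {A : Matrix n n ℂ} (hA : A.PosSemidef) : hA.sqrt = CFC.sqrt A := by
  rw [CFC.sqrt_eq_cfc, cfc_nnreal_eq_real _ A hA.nonneg, hA.1.cfc_eq, Matrix.IsHermitian.cfc,
    Unitary.conjStarAlgAut_apply, Matrix.PosSemidef.sqrt]
  congr 2
  ext i j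
  simp [Matrix.diagonal_apply, Real.coe_toNNReal', max_eq_left (hA.eigenvalues_nonneg i)]

section TraceNorm

variable {m ι : Type*} [Fintype m] [Fintype ι] [DecidableEq ι]

open scoped MatrixOrder in
theorem traceNorm_eq_re_trace_of_mul_self {A S : Matrix ι ι ℂ} (hS : S.PosSemidef)
    (h : S * S = Aᴴ * A) : traceNorm A = S.trace.re := by
  rw [traceNorm, (posSemidef_conjTranspose_mul_self A).sqrt_eq_cfc_sqrt,
    CFC.sqrt_unique h hS.nonneg]

theorem sum_smul_mul_sum_smul_of_pairwise {ρ : m → Matrix ι ι ℂ}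
    (horth : Pairwise fun i j => ρ i * ρ j = 0) (c d : m → ℝ) :
    (∑ i, c i • ρ i) * (∑ j, d j • ρ j) = ∑ i, (c i * d i) • (ρ i * ρ i) := by
  rw [Finset.sum_mul_sum]
  refine Finset.sum_congr rfl fun i _ => ?_
  rw [Finset.sum_eq_single i (fun j _ hji => by rw [smul_mul_smul, horth hji.symm, smul_zero])
    (by simp), smul_mul_smul]

theorem traceNorm_sum_smul_of_pairwise {ρ : m → Matrix ι ι ℂ} (hρ : ∀ i, (ρ i).PosSemidef)
    (horth : Pairwise fun i j => ρ i * ρ j = 0) (c : m → ℝ) :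
    traceNorm (∑ i, c i • ρ i) = ∑ i, |c i| * (ρ i).trace.re := by
  have hS : (∑ i, |c i| • ρ i).PosSemidef :=
    posSemidef_sum _ fun i _ => (hρ i).smul (abs_nonneg (c i))
  have hA : (∑ i, c i • ρ i)ᴴ = ∑ i, c i • ρ i := by
    simp [conjTranspose_sum, (hρ _).1.eq]
  rw [traceNorm_eq_re_trace_of_mul_self hS (by
    rw [hA, sum_smul_mul_sum_smul_of_pairwise horth, sum_smul_mul_sum_smul_of_pairwise horth]
    simp_rw [abs_mul_abs_self])]
  simp [trace_sum, trace_smul]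

end TraceNorm

section PartialTrace

variable {n ι κ : Type*} [Fintype n] [Fintype ι] [Fintype κ]

theorem ptrace₁_vecMulVec_mulVec_eq_inner_smul (V : Matrix (ι × κ) n ℂ) (σ : Matrix κ κ ℂ)
    (hconst : ∀ φ : n → ℂ, (∑ i, ‖φ i‖ ^ 2) = 1 → ptrace₁ (outer (V *ᵥ φ)) = σ)
    (x y : EuclideanSpace ℂ n) :
    ptrace₁ (vecMulVec (V *ᵥ x) (star (V *ᵥ y))) = inner ℂ y x • σ := by
  let B : EuclideanSpace ℂ n →ₗ[ℂ] EuclideanSpace ℂ n →ₗ⋆[ℂ] Matrix κ κ ℂ :=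
    LinearMap.mk₂'ₛₗ (RingHom.id ℂ) (starRingEnd ℂ)
      (fun x y => ptrace₁ (vecMulVec (V *ᵥ x) (star (V *ᵥ y))) - inner ℂ y x • σ)
      (fun x x' y => by
        ext s t
        simp [ptrace₁, mulVec_add, vecMulVec_apply, add_mul, Finset.sum_add_distrib, add_smul]
        ring)
      (fun c x y => by
        ext s t
        simp [ptrace₁, mulVec_smul, vecMulVec_apply, Finset.mul_sum, mul_sub, mul_assoc])
      (fun x y y' => by
        ext s t
        simp [ptrace₁, mulVec_add, vecMulVec_apply, mul_add, Finset.sum_add_distrib, add_smul]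
        ring)
      (fun c x y => by
        ext s t
        simp [ptrace₁, mulVec_smul, vecMulVec_apply, Finset.mul_sum, mul_sub, mul_left_comm]
        ring)
  have hunit : ∀ u : EuclideanSpace ℂ n, ‖u‖ = 1 → B u u = 0 := by
    intro u hu
    have hnorm : ∑ i, ‖u i‖ ^ 2 = 1 := by rw [← EuclideanSpace.norm_sq_eq, hu, one_pow]
    change ptrace₁ (outer (V *ᵥ u)) - inner ℂ u u • σ = 0
    rw [hconst _ hnorm, inner_self_eq_norm_sq_to_K, hu]
    simp
  exact sub_eq_zero.1 <| B.apply_eq_zero_of_apply_self_eq_zero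
    (B.apply_self_eq_zero_of_forall_norm_eq_one hunit) x y

theorem ptrace₂_outer (X : ι × κ → ℂ) : ptrace₂ (outer X) = ∑ s, outer (fun i => X (i, s)) := by
  ext i j
  simp [ptrace₂, outer, vecMulVec_apply, Matrix.sum_apply]

theorem posSemidef_ptrace₂_outer (X : ι × κ → ℂ) : (ptrace₂ (outer X)).PosSemidef := by
  rw [ptrace₂_outer]
  exact posSemidef_sum _ fun s _ => posSemidef_outer _

theorem ptrace₂_outer_mul_ptrace₂_outer_eq_zero (X Y : ι × κ → ℂ)
    (h : ptrace₁ (vecMulVec Y (star X)) = 0) :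
    ptrace₂ (outer X) * ptrace₂ (outer Y) = 0 := by
  rw [ptrace₂_outer, ptrace₂_outer, Finset.sum_mul_sum]
  refine Finset.sum_eq_zero fun s _ => Finset.sum_eq_zero fun t _ => ?_
  have hst : star (fun i => X (i, s)) ⬝ᵥ (fun i => Y (i, t)) = 0 := by
    simpa [ptrace₁, dotProduct, vecMulVec_apply, mul_comm] using congr_fun₂ h t s
  rw [outer, outer, vecMulVec_mul_vecMulVec, hst, zero_smul, vecMulVec_zero]

theorem trace_ptrace₂ (M : Matrix (ι × κ) (ι × κ) ℂ) : (ptrace₂ M).trace = M.trace := by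
  simp [trace, ptrace₂, Fintype.sum_prod_type]

def ptrace₂Conj (V : Matrix (ι × κ) n ℂ) : Matrix n n ℂ →ₗ[ℂ] Matrix ι ι ℂ where
  toFun M := ptrace₂ (V * M * Vᴴ)
  map_add' M N := by ext; simp [ptrace₂, Matrix.mul_add, Matrix.add_mul, Finset.sum_add_distrib]
  map_smul' c M := by ext; simp [ptrace₂, Finset.mul_sum]

theorem ptrace₂Conj_outer (V : Matrix (ι × κ) n ℂ) (x : n → ℂ) :
    ptrace₂Conj V (outer x) = ptrace₂ (outer (V *ᵥ x)) := by
  simp [ptrace₂Conj, outer, mul_vecMulVec, vecMulVec_mul, star_mulVec]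

theorem trace_ptrace₂Conj [DecidableEq n] {V : Matrix (ι × κ) n ℂ} (hV : Vᴴ * V = 1)
    (M : Matrix n n ℂ) : (ptrace₂Conj V M).trace = M.trace := by
  rw [ptrace₂Conj, LinearMap.coe_mk, AddHom.coe_mk, trace_ptrace₂, trace_mul_comm,
    ← Matrix.mul_assoc, hV, Matrix.one_mul]

end PartialTrace

/-- If the complementary channel is exactly constant on pure inputs
(`tr_B(VφV†) = σ` for all pure `φ`), then the channel is perfectly distance-preserving
on pure states: `‖tr_F(VφV†) − tr_F(VψV†)‖₁ = ‖φ − ψ‖₁`. -/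
theorem exact_decoupling_preserves_distance
    {k b f : ℕ} (V : Matrix (Fin b × Fin f) (Fin k) ℂ) (hV : Vᴴ * V = 1)
    (σ : Matrix (Fin f) (Fin f) ℂ)
    (hconst : ∀ φ : Fin k → ℂ, (∑ i, ‖φ i‖ ^ 2) = 1 →
      ptrace₁ (outer (V *ᵥ φ)) = σ) :
    ∀ φ ψ : Fin k → ℂ, (∑ i, ‖φ i‖ ^ 2) = 1 →
      (∑ i, ‖ψ i‖ ^ 2) = 1 →
      traceNorm (ptrace₂ (outer (V *ᵥ φ)) - ptrace₂ (outer (V *ᵥ ψ))) =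
        traceNorm (outer φ - outer ψ) := by
  intro φ ψ _ _
  have hD : (outer φ - outer ψ).IsHermitian := (posSemidef_outer φ).1.sub (posSemidef_outer ψ).1
  have hdecomp := hD.eq_sum_smul_outer_eigenvectorBasis
  set e := hD.eigenvectorBasis
  have horth : Pairwise fun i j => inner ℂ (e i) (e j) = 0 := fun _ _ hij => e.orthonormal.2 hij
  have himage : ptrace₂ (outer (V *ᵥ φ)) - ptrace₂ (outer (V *ᵥ ψ)) =
      ∑ j, hD.eigenvalues j • ptrace₂ (outer (V *ᵥ e j)) := by
    rw [← ptrace₂Conj_outer, ← ptrace₂Conj_outer, ← map_sub]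
    exact (congrArg (ptrace₂Conj V) hdecomp).trans (by simp [ptrace₂Conj_outer])
  have hsrc : traceNorm (outer φ - outer ψ) = ∑ j, |hD.eigenvalues j| * (outer (e j)).trace.re :=
    (congrArg traceNorm hdecomp).trans <|
      traceNorm_sum_smul_of_pairwise (fun _ => posSemidef_outer _)
      (fun _ _ hij => outer_mul_outer_eq_zero_of_inner_eq_zero (horth hij)) _
  have himg : traceNorm (ptrace₂ (outer (V *ᵥ φ)) - ptrace₂ (outer (V *ᵥ ψ))) =
      ∑ j, |hD.eigenvalues j| * (ptrace₂ (outer (V *ᵥ e j))).trace.re := by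
    rw [himage]
    refine traceNorm_sum_smul_of_pairwise (fun _ => posSemidef_ptrace₂_outer _)
      (fun i j hij => ptrace₂_outer_mul_ptrace₂_outer_eq_zero _ _ ?_) _
    rw [ptrace₁_vecMulVec_mulVec_eq_inner_smul V σ hconst, horth hij, zero_smul]
  rw [himg, hsrc]
  simp_rw [← ptrace₂Conj_outer, trace_ptrace₂Conj hV]
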